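/- arXiv:2411.07203 — 4 statements merged into one kernel-verified Lean document; each statement's English description precedes it below -/
import Mathlib

section
/- The function f(γ) = (γ^{−1}−1)^{−γ} − sqrt(1−2γ) has exactly one zero γ* on the open interval (0, 1/2); moreover f(γ) < 0 for 0 < γ < γ* and f(γ) > 0 for γ* < γ < 1/2. -/
/-!
Both terms of `f γ` are exponentials, so `f γ` has the sign of the difference of their exponents,
`logRatio γ = γ log γ - γ log (1 - γ) - log (1 - 2γ) / 2`. Its derivative
`log γ - log (1 - γ) + 1 / (1 - γ) + 1 / (1 - 2γ)` is increasing, so `logRatio` is strictly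
convex on `[0, 1/2)`; as it vanishes at `0`, it is negative before and positive after any zero
in `(0, 1/2)`.
A zero exists because `logRatio (1/6) = log (27/40) / 6 < 0 < log (4/3) / 4 = logRatio (1/4)`.
-/

open Set Real

def IsSignChange (g : ℝ → ℝ) (a b z : ℝ) : Prop :=
  z ∈ Ioo a b ∧ g z = 0 ∧ (∀ x ∈ Ioo a z, g x < 0) ∧ ∀ x ∈ Ioo z b, 0 < g x

section SignChange

variable {f g : ℝ → ℝ} {a b z : ℝ}

theorem IsSignChange.unique {z' : ℝ} (h : IsSignChange g a b z) (h' : IsSignChange g a b z') :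
    z = z' := by
  rcases lt_trichotomy z z' with hlt | rfl | hgt
  · exact absurd h'.2.1 (h.2.2.2 z' ⟨hlt, h'.1.2⟩).ne'
  · rfl
  · exact absurd h.2.1 (h'.2.2.2 z ⟨hgt, h.1.2⟩).ne'

theorem isSignChange_congr (h : ∀ x ∈ Ioo a b, SignType.sign (f x) = SignType.sign (g x)) :
    IsSignChange f a b z ↔ IsSignChange g a b z := by
  have hneg : ∀ x ∈ Ioo a b, f x < 0 ↔ g x < 0 := fun x hx => by
    rw [← sign_eq_neg_one_iff, h x hx, sign_eq_neg_one_iff]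
  have hzero : ∀ x ∈ Ioo a b, f x = 0 ↔ g x = 0 := fun x hx => by
    rw [← _root_.sign_eq_zero_iff, h x hx, _root_.sign_eq_zero_iff]
  have hpos : ∀ x ∈ Ioo a b, 0 < f x ↔ 0 < g x := fun x hx => by
    rw [← sign_eq_one_iff, h x hx, sign_eq_one_iff]
  refine and_congr_right fun hz => ?_
  refine and_congr (hzero z hz) (and_congr ?_ ?_)
  · exact forall₂_congr fun x hx => hneg x ⟨hx.1, hx.2.trans hz.2⟩
  · exact forall₂_congr fun x hx => hpos x ⟨hz.1.trans hx.1, hx.2⟩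

theorem StrictConvexOn.isSignChange (hg : StrictConvexOn ℝ (Ico a b) g) (ha : g a = 0)
    (hz : z ∈ Ioo a b) (hgz : g z = 0) : IsSignChange g a b z := by
  have ha_mem : a ∈ Ico a b := ⟨le_rfl, hz.1.trans hz.2⟩
  have hz_mem : z ∈ Ico a b := Ioo_subset_Ico_self hz
  have hneg : ∀ x ∈ Ioo a z, g x < 0 := fun x hx => by
    simpa [ha, hgz] using hg.lt_on_openSegment ha_mem hz_mem hz.1.ne
      (by rwa [openSegment_eq_Ioo hz.1])
  refine ⟨hz, hgz, hneg, fun x hx => ?_⟩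
  -- `g` already increases from the midpoint `w` of `[a, z]` to `z`, so it keeps increasing.
  have hw : (a + z) / 2 ∈ Ioo a z := ⟨by linarith [hz.1], by linarith [hz.1]⟩
  have hz_seg : z ∈ openSegment ℝ ((a + z) / 2) x := by
    rw [openSegment_eq_Ioo (hw.2.trans hx.1)]
    exact ⟨hw.2, hx.1⟩
  calc 0 = g z := hgz.symm
    _ < g x := hg.convexOn.lt_right_of_left_lt ⟨hw.1.le, hw.2.trans hz.2⟩
        ⟨hz.1.le.trans hx.1.le, hx.2⟩ hz_seg (hgz ▸ hneg _ hw)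

theorem StrictConvexOn.existsUnique_isSignChange (hg : StrictConvexOn ℝ (Ico a b) g)
    (ha : g a = 0) {c d : ℝ} (hc : c ∈ Ioo a b) (hd : d ∈ Ioo a b) (hgc : g c < 0)
    (hgd : 0 < g d) : ∃! z, IsSignChange g a b z := by
  have hsub : uIcc c d ⊆ Ioo a b := ordConnected_Ioo.uIcc_subset hc hd
  have hcont : ContinuousOn g (Ioo a b) := by
    simpa using hg.convexOn.continuousOn_interior
  obtain ⟨z, hz, hgz⟩ := intermediate_value_uIcc (hcont.mono hsub)
    (mem_uIcc_of_le hgc.le hgd.le)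
  have hchange := hg.isSignChange ha (hsub hz) hgz
  exact ⟨z, hchange, fun z' h' => h'.unique hchange⟩

end SignChange

theorem StrictMono.sign_sub {φ : ℝ → ℝ} (hφ : StrictMono φ) (u v : ℝ) :
    SignType.sign (φ u - φ v) = SignType.sign (u - v) := by
  rcases lt_trichotomy u v with h | rfl | h
  · rw [sign_neg (sub_neg.2 h), sign_neg (sub_neg.2 (hφ h))]
  · simp
  · rw [sign_pos (sub_pos.2 h), sign_pos (sub_pos.2 (hφ h))]

noncomputable def logRatio (γ : ℝ) : ℝ :=
  γ * log γ - γ * log (1 - γ) - log (1 - 2 * γ) / 2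

theorem sign_rpow_sub_sqrt {γ : ℝ} (hγ : γ ∈ Ioo (0 : ℝ) (1 / 2)) :
    SignType.sign ((γ⁻¹ - 1) ^ (-γ) - √(1 - 2 * γ)) = SignType.sign (logRatio γ) := by
  obtain ⟨h0, h1⟩ := hγ
  have hbase : γ⁻¹ - 1 = (1 - γ) / γ := by field_simp
  rw [hbase, rpow_def_of_pos (div_pos (by linarith) h0), log_div (by linarith) h0.ne',
    sqrt_eq_rpow, rpow_def_of_pos (by linarith), exp_strictMono.sign_sub, logRatio]
  congr 1
  ring

theorem hasDerivAt_logRatio {x : ℝ} (hx : x ∈ Ioo (0 : ℝ) (1 / 2)) :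
    HasDerivAt logRatio (log x - log (1 - x) + (1 - x)⁻¹ + (1 - 2 * x)⁻¹) x := by
  obtain ⟨h0, h1⟩ := hx
  have h₁ := (hasDerivAt_id' x).mul (hasDerivAt_log h0.ne')
  have h₂ := (hasDerivAt_id' x).mul (((hasDerivAt_id' x).const_sub 1).log (by linarith))
  have h₃ := ((((hasDerivAt_id' x).const_mul 2).const_sub 1).log (by linarith)).div_const 2
  refine ((h₁.sub h₂).sub h₃).congr_deriv ?_
  have : 1 - x ≠ 0 := by linarith
  have : 1 - 2 * x ≠ 0 := by linarith
  field_simp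
  ring

theorem strictMonoOn_deriv_logRatio : StrictMonoOn (deriv logRatio) (Ioo 0 (1 / 2)) := by
  refine StrictMonoOn.congr (f₁ := fun x => log x - log (1 - x) + (1 - x)⁻¹ + (1 - 2 * x)⁻¹)
    (fun x hx y hy hxy => ?_) fun x hx => (hasDerivAt_logRatio hx).deriv.symm
  have : log x < log y := log_lt_log hx.1 hxy
  have : log (1 - y) < log (1 - x) := log_lt_log (by linarith [hy.2]) (by linarith)
  have : (1 - x)⁻¹ < (1 - y)⁻¹ := inv_strictAnti₀ (by linarith [hy.2]) (by linarith)
  have : (1 - 2 * x)⁻¹ < (1 - 2 * y)⁻¹ := inv_strictAnti₀ (by linarith [hy.2]) (by linarith)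
  dsimp only
  linarith

theorem continuousOn_logRatio : ContinuousOn logRatio (Ico 0 (1 / 2)) := by
  have h₁ : ∀ x ∈ Ico (0 : ℝ) (1 / 2), 1 - x ≠ 0 := fun x hx => by linarith [hx.2]
  have h₂ : ∀ x ∈ Ico (0 : ℝ) (1 / 2), 1 - 2 * x ≠ 0 := fun x hx => by linarith [hx.2]
  refine (continuous_mul_log.continuousOn.sub (continuousOn_id.mul ?_)).sub (.div_const ?_ 2)
  · exact (continuousOn_const.sub continuousOn_id).log h₁
  · exact (continuousOn_const.sub (continuousOn_const.mul continuousOn_id)).log h₂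

theorem strictConvexOn_logRatio : StrictConvexOn ℝ (Ico 0 (1 / 2)) logRatio :=
  StrictMonoOn.strictConvexOn_of_deriv (convex_Ico 0 (1 / 2)) continuousOn_logRatio
    (by simpa using strictMonoOn_deriv_logRatio)

theorem logRatio_zero : logRatio 0 = 0 := by simp [logRatio]

theorem logRatio_one_sixth : logRatio (1 / 6) = log (27 / 40) / 6 := by
  rw [show (27 / 40 : ℝ) = 1 / 6 / (5 / 6) / (2 / 3) ^ 3 by norm_num, log_div, log_div, log_pow,
    logRatio] <;> norm_num
  ring

theorem logRatio_one_quarter : logRatio (1 / 4) = log (4 / 3) / 4 := by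
  rw [show (4 / 3 : ℝ) = 1 / 4 / (3 / 4) / (1 / 2) ^ 2 by norm_num, log_div, log_div, log_pow,
    logRatio] <;> norm_num
  ring

/-- The function `f(γ) = (γ⁻¹−1)^{−γ} − sqrt(1−2γ)` has exactly one zero
`γ*` on `(0, 1/2)`; moreover `f < 0` on `(0, γ*)` and `f > 0` on `(γ*, 1/2)`. -/
theorem unique_zero_of_beta_minus_one
    (f : ℝ → ℝ) (hf : ∀ γ : ℝ, f γ = (γ⁻¹ - 1) ^ (-γ) - Real.sqrt (1 - 2 * γ)) :
    ∃! γs : ℝ, γs ∈ Ioo (0:ℝ) (1/2) ∧ f γs = 0 ∧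
      (∀ γ ∈ Ioo (0:ℝ) γs, f γ < 0) ∧
      (∀ γ ∈ Ioo γs (1/2 : ℝ), 0 < f γ) := by
  have hsign : ∀ γ ∈ Ioo (0 : ℝ) (1 / 2), SignType.sign (f γ) = SignType.sign (logRatio γ) :=
    fun γ hγ => hf γ ▸ sign_rpow_sub_sqrt hγ
  have hneg : logRatio (1 / 6) < 0 := by
    rw [logRatio_one_sixth]
    exact div_neg_of_neg_of_pos (log_neg (by norm_num) (by norm_num)) (by norm_num)
  have hpos : 0 < logRatio (1 / 4) := by
    rw [logRatio_one_quarter]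
    exact div_pos (log_pos (by norm_num)) (by norm_num)
  exact (existsUnique_congr fun z => isSignChange_congr hsign).2 <|
    strictConvexOn_logRatio.existsUnique_isSignChange logRatio_zero
      (by norm_num) (by norm_num) hneg hpos
end

section
/- The function g(γ) = (γ^{−1}−1)^{−2γ} − (1−2γ) satisfies: g(0+) = 0, g is first negative and then positive on (0,1/2), i.e., there exists a unique γ* ∈ (0,1/2) with g(γ*) = 0, g < 0 on (0,γ*) and g > 0 on (γ*, 1/2). Equivalently, β_γ = (γ^{−1}−1)^{−γ}/sqrt(1−2γ) satisfies β_γ < 1 for γ ∈ (0,γ*) and β_γ > 1 for γ ∈ (γ*, 1/2). -/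
/-!
Writing `H` for the binary entropy, `log β_γ = -H(γ) - log (1 - γ) - log (1 - 2γ) / 2` on
`(0, 1/2)`. This is strictly convex on `[0, 1/2)` (entropy is strictly concave and logarithms of
affine functions are concave), vanishes at `0`, is negative at `1/10` and positive at `1/4`.
A strictly convex function vanishing at `0` and at some `γ*` is negative on `(0, γ*)` and positive
beyond `γ*`, so `log β_γ` has exactly one zero in `(0, 1/2)`. Finally
`g(γ) = (1 - 2γ) (β_γ² - 1)` has the sign of `log β_γ`.
-/

open Set Real

theorem StrictConvexOn.neg_of_mem_Ioo {s : Set ℝ} {f : ℝ → ℝ} (hf : StrictConvexOn ℝ s f)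
    {a b x : ℝ} (ha : a ∈ s) (hb : b ∈ s) (hfa : f a = 0) (hfb : f b = 0) (hx : x ∈ Ioo a b) :
    f x < 0 := by
  have hab : a < b := hx.1.trans hx.2
  simpa [hfa, hfb] using hf.lt_on_openSegment ha hb hab.ne (by rwa [openSegment_eq_Ioo hab])

theorem StrictConvexOn.pos_of_lt {s : Set ℝ} {f : ℝ → ℝ} (hf : StrictConvexOn ℝ s f)
    {a b x : ℝ} (ha : a ∈ s) (hx : x ∈ s) (hfa : f a = 0) (hfb : f b = 0) (hab : a < b)
    (hbx : b < x) : 0 < f x := by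
  have hax : a < x := hab.trans hbx
  have h := hf.lt_on_openSegment ha hx hax.ne (by rw [openSegment_eq_Ioo hax]; exact ⟨hab, hbx⟩)
  rw [hfa, hfb, lt_max_iff] at h
  exact h.resolve_left (lt_irrefl 0)

theorem concaveOn_log_one_sub_mul (a : ℝ) :
    ConcaveOn ℝ {x | a * x < 1} (fun x => log (1 - a * x)) := by
  have hs : {x | a * x < 1} = ⇑(AffineMap.const ℝ ℝ (1 : ℝ) - a • AffineMap.id ℝ ℝ) ⁻¹' Ioi 0 := by
    ext; simp
  rw [hs]
  exact strictConcaveOn_log_Ioi.concaveOn.comp_affineMap _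

noncomputable def logBeta (γ : ℝ) : ℝ := -binEntropy γ - log (1 - γ) - log (1 - 2 * γ) / 2

theorem logBeta_zero : logBeta 0 = 0 := by simp [logBeta]

theorem logBeta_eq {γ : ℝ} (h₀ : 0 < γ) (h₁ : γ < 1) :
    logBeta γ = γ * log (γ / (1 - γ)) - log (1 - 2 * γ) / 2 := by
  have : 0 < 1 - γ := by linarith
  rw [logBeta, binEntropy, log_div h₀.ne' this.ne', log_inv, log_inv]
  ring

theorem strictConvexOn_logBeta : StrictConvexOn ℝ (Ico 0 (1 / 2)) logBeta := by
  have hconv : Convex ℝ (Ico (0 : ℝ) (1 / 2)) := convex_Ico 0 (1 / 2)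
  have hH := strictConcave_binEntropy.subset
    (Ico_subset_Icc_self.trans (Icc_subset_Icc_right (by norm_num))) hconv
  have h₁ := (concaveOn_log_one_sub_mul 1).subset (fun x hx => show 1 * x < 1 by linarith [hx.2]) hconv
  have h₂ := ((concaveOn_log_one_sub_mul 2).smul (c := 1 / 2) (by norm_num)).subset
    (fun x hx => show 2 * x < 1 by linarith [hx.2]) hconv
  refine ((hH.neg.sub_concaveOn h₁).sub_concaveOn h₂).congr fun x _ => ?_
  simp only [one_mul, one_div, smul_eq_mul, Pi.sub_apply, Pi.neg_apply, logBeta, sub_right_inj]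
  ring

theorem continuousOn_logBeta : ContinuousOn logBeta (Ioo 0 (1 / 2)) := by
  simpa using strictConvexOn_logBeta.convexOn.continuousOn_interior

theorem logBeta_one_tenth_neg : logBeta (1 / 10) < 0 := by
  have h : log ((1 / 9) / (4 / 5) ^ 5) < 0 := log_neg (by norm_num) (by norm_num)
  rw [log_div (by norm_num) (by norm_num), log_pow] at h
  rw [logBeta_eq (by norm_num) (by norm_num), show (1 : ℝ) / 10 / (1 - 1 / 10) = 1 / 9 by norm_num,
    show (1 : ℝ) - 2 * (1 / 10) = 4 / 5 by norm_num]
  push_cast at h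
  linarith

theorem logBeta_one_fourth_pos : 0 < logBeta (1 / 4) := by
  have h : 0 < log ((1 / 3) / (1 / 2) ^ 2) := log_pos (by norm_num)
  rw [log_div (by norm_num) (by norm_num), log_pow] at h
  rw [logBeta_eq (by norm_num) (by norm_num), show (1 : ℝ) / 4 / (1 - 1 / 4) = 1 / 3 by norm_num,
    show (1 : ℝ) - 2 * (1 / 4) = 1 / 2 by norm_num]
  push_cast at h
  linarith

theorem rpow_neg_div_sqrt_eq_exp_logBeta {γ : ℝ} (hγ : γ ∈ Ioo (0 : ℝ) (1 / 2)) :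
    (γ⁻¹ - 1) ^ (-γ) / √(1 - 2 * γ) = exp (logBeta γ) := by
  obtain ⟨h₀, h₁⟩ := hγ
  have h1γ : 0 < 1 - γ := by linarith
  have h12 : 0 < 1 - 2 * γ := by linarith
  have hbase : γ⁻¹ - 1 = (γ / (1 - γ))⁻¹ := by field_simp
  rw [logBeta_eq h₀ (by linarith), exp_sub, sqrt_eq_rpow, rpow_def_of_pos h12, hbase,
    rpow_def_of_pos (by positivity), log_inv]
  congr 1 <;> ring_nf

theorem rpow_neg_two_mul_sub_eq {γ : ℝ} (hγ : γ ∈ Ioo (0 : ℝ) (1 / 2)) :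
    (γ⁻¹ - 1) ^ (-(2 * γ)) - (1 - 2 * γ) = (1 - 2 * γ) * (exp (logBeta γ) ^ 2 - 1) := by
  have h12 : 0 < 1 - 2 * γ := by linarith [hγ.2]
  have hbase : 0 ≤ γ⁻¹ - 1 := sub_nonneg.2 ((one_le_inv₀ hγ.1).2 (by linarith [hγ.2]))
  rw [← rpow_neg_div_sqrt_eq_exp_logBeta hγ, div_pow, sq_sqrt h12.le,
    show -(2 * γ) = -γ * 2 by ring, rpow_mul hbase, rpow_two, mul_sub,
    mul_div_cancel₀ _ h12.ne', mul_one]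

theorem rpow_sub_neg_and_lt_one_of_logBeta_neg {γ : ℝ} (hγ : γ ∈ Ioo (0 : ℝ) (1 / 2))
    (h : logBeta γ < 0) :
    (γ⁻¹ - 1) ^ (-(2 * γ)) - (1 - 2 * γ) < 0 ∧ (γ⁻¹ - 1) ^ (-γ) / √(1 - 2 * γ) < 1 := by
  have hexp : exp (logBeta γ) < 1 := exp_lt_one_iff.2 h
  rw [rpow_neg_two_mul_sub_eq hγ, rpow_neg_div_sqrt_eq_exp_logBeta hγ]
  refine ⟨mul_neg_of_pos_of_neg (by linarith [hγ.2]) ?_, hexp⟩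
  nlinarith [exp_pos (logBeta γ)]

theorem rpow_sub_pos_and_one_lt_of_logBeta_pos {γ : ℝ} (hγ : γ ∈ Ioo (0 : ℝ) (1 / 2))
    (h : 0 < logBeta γ) :
    0 < (γ⁻¹ - 1) ^ (-(2 * γ)) - (1 - 2 * γ) ∧ 1 < (γ⁻¹ - 1) ^ (-γ) / √(1 - 2 * γ) := by
  have hexp : 1 < exp (logBeta γ) := one_lt_exp_iff.2 h
  rw [rpow_neg_two_mul_sub_eq hγ, rpow_neg_div_sqrt_eq_exp_logBeta hγ]
  refine ⟨mul_pos (by linarith [hγ.2]) ?_, hexp⟩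
  nlinarith

/-- The function `g(γ) = (γ⁻¹−1)^{−2γ} − (1−2γ)` has a unique zero
`γ* ∈ (0,1/2)`, with `g < 0` on `(0,γ*)` and `g > 0` on `(γ*,1/2)`; equivalently,
`β_γ = (γ⁻¹−1)^{−γ}/sqrt(1−2γ)` satisfies `β_γ < 1` on `(0,γ*)` and `β_γ > 1`
on `(γ*,1/2)`. -/
theorem unique_zero_of_g_and_beta_comparison
    (g β : ℝ → ℝ)
    (hg : ∀ γ : ℝ, g γ = (γ⁻¹ - 1) ^ (-(2 * γ)) - (1 - 2 * γ))
    (hβ : ∀ γ : ℝ, β γ = (γ⁻¹ - 1) ^ (-γ) / Real.sqrt (1 - 2 * γ)) :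
    ∃! γs : ℝ, γs ∈ Ioo (0:ℝ) (1/2) ∧ g γs = 0 ∧
      (∀ γ ∈ Ioo (0:ℝ) γs, g γ < 0 ∧ β γ < 1) ∧
      (∀ γ ∈ Ioo γs (1/2 : ℝ), 0 < g γ ∧ 1 < β γ) := by
  simp only [hg, hβ]
  obtain ⟨c, hc, hc0⟩ := intermediate_value_Icc (by norm_num : (1 / 10 : ℝ) ≤ 1 / 4)
    (continuousOn_logBeta.mono fun x hx => ⟨by linarith [hx.1], by linarith [hx.2]⟩)
    ⟨logBeta_one_tenth_neg.le, logBeta_one_fourth_pos.le⟩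
  have hcI : c ∈ Ioo (0 : ℝ) (1 / 2) := ⟨by linarith [hc.1], by linarith [hc.2]⟩
  have h0 : (0 : ℝ) ∈ Ico 0 (1 / 2) := by norm_num
  have hneg : ∀ γ ∈ Ioo 0 c, (γ⁻¹ - 1) ^ (-(2 * γ)) - (1 - 2 * γ) < 0 ∧
      (γ⁻¹ - 1) ^ (-γ) / √(1 - 2 * γ) < 1 := fun γ hγ =>
    rpow_sub_neg_and_lt_one_of_logBeta_neg ⟨hγ.1, hγ.2.trans hcI.2⟩
      (strictConvexOn_logBeta.neg_of_mem_Ioo h0 (Ioo_subset_Ico_self hcI) logBeta_zero hc0 hγ)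
  have hpos : ∀ γ ∈ Ioo c (1 / 2), 0 < (γ⁻¹ - 1) ^ (-(2 * γ)) - (1 - 2 * γ) ∧
      1 < (γ⁻¹ - 1) ^ (-γ) / √(1 - 2 * γ) := fun γ hγ =>
    rpow_sub_pos_and_one_lt_of_logBeta_pos ⟨hcI.1.trans hγ.1, hγ.2⟩
      (strictConvexOn_logBeta.pos_of_lt h0 ⟨(hcI.1.trans hγ.1).le, hγ.2⟩ logBeta_zero hc0
        hcI.1 hγ.1)
  refine ⟨c, ⟨hcI, by rw [rpow_neg_two_mul_sub_eq hcI, hc0]; simp, hneg, hpos⟩, ?_⟩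
  rintro y ⟨hy, hy0, -, -⟩
  rcases lt_trichotomy y c with h | h | h
  · exact absurd hy0 (hneg y ⟨hy.1, h⟩).1.ne
  · exact h
  · exact absurd hy0 (hpos y ⟨h, hy.2⟩).1.ne'
end

section
/- Suppose F̄ is regularly varying at ∞ with index −1/γ for some γ ∈ (0, 1/2), and let e_τ → ∞ as τ → 1. Then lim_{τ→1} E[((X−e_τ)₊)²] / (e_τ² F̄(e_τ)) = 2γ²/((1−2γ)(1−γ)), where X ≥ 0 has survival function F̄ with E[X²] < ∞. -/
/-!
For `t > 0`, the layer-cake formula and the substitution `s = t (u - 1)` give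
`E[((X - t)₊)²] / (t² F̄(t)) = 2 ∫₁^∞ (F̄(t u) / F̄(t)) (u - 1) du`.
By regular variation the integrand tends pointwise to `u^(-1/γ) (u - 1)`. Since `1/γ > 2` we can
pick `ρ ∈ (2, 1/γ)`; for large `t` the doubling estimate `F̄(2t) ≤ 2^(-ρ) F̄(t)` holds, and
iterating it gives the Potter bound `F̄(t u) ≤ 2^ρ u^(-ρ) F̄(t)` for all `u ≥ 1`, an integrable
majorant. Dominated convergence and `∫₁^∞ u^(-p) (u - 1) du = 1/((p - 1)(p - 2))` conclude.
-/

open MeasureTheory Set Filter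

section RpowIntegral

variable {p : ℝ}

lemma rpow_neg_mul_sub_one_eq {u : ℝ} (hu : 0 < u) (p : ℝ) :
    u ^ (-p) * (u - 1) = u ^ (1 - p) - u ^ (-p) := by
  rw [sub_eq_neg_add 1 p, Real.rpow_add hu, Real.rpow_one]
  ring

lemma integrableOn_Ioi_one_rpow_neg_mul_sub_one (hp : 2 < p) :
    IntegrableOn (fun u : ℝ => u ^ (-p) * (u - 1)) (Ioi 1) := by
  refine ((integrableOn_Ioi_rpow_of_lt (by linarith) one_pos).sub
    (integrableOn_Ioi_rpow_of_lt (by linarith) one_pos)).congr_fun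
    (fun u hu => (rpow_neg_mul_sub_one_eq (one_pos.trans hu) p).symm) measurableSet_Ioi

lemma integral_Ioi_one_rpow_neg_mul_sub_one (hp : 2 < p) :
    ∫ u in Ioi (1 : ℝ), u ^ (-p) * (u - 1) = 1 / ((p - 1) * (p - 2)) := by
  have h1 : 1 - p < -1 := by linarith
  have h2 : -p < -1 := by linarith
  rw [setIntegral_congr_fun measurableSet_Ioi
      (fun u hu => rpow_neg_mul_sub_one_eq (one_pos.trans hu) p),
    integral_sub (integrableOn_Ioi_rpow_of_lt h1 one_pos) (integrableOn_Ioi_rpow_of_lt h2 one_pos),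
    integral_Ioi_rpow_of_lt h1 one_pos, integral_Ioi_rpow_of_lt h2 one_pos,
    Real.one_rpow, Real.one_rpow]
  have : p - 1 ≠ 0 := by linarith
  have : p - 2 ≠ 0 := by linarith
  rw [show 1 - p + 1 = -(p - 2) by ring, show -p + 1 = -(p - 1) by ring]
  field_simp
  ring

end RpowIntegral

section Potter

variable {F : ℝ → ℝ} {ρ t₀ t : ℝ}

lemma apply_mul_two_pow_le (ht₀ : 0 ≤ t₀)
    (hdouble : ∀ t, t₀ ≤ t → F (t * 2) ≤ 2 ^ (-ρ) * F t) (ht : t₀ ≤ t) (n : ℕ) :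
    F (t * 2 ^ n) ≤ (2 ^ (-ρ)) ^ n * F t := by
  induction n with
  | zero => simp
  | succ n ih =>
    have hle : t₀ ≤ t * 2 ^ n :=
      ht.trans (le_mul_of_one_le_right (ht₀.trans ht) (one_le_pow₀ one_le_two))
    calc F (t * 2 ^ (n + 1)) = F (t * 2 ^ n * 2) := by rw [pow_succ, mul_assoc]
      _ ≤ 2 ^ (-ρ) * F (t * 2 ^ n) := hdouble _ hle
      _ ≤ 2 ^ (-ρ) * ((2 ^ (-ρ)) ^ n * F t) := by gcongr
      _ = (2 ^ (-ρ)) ^ (n + 1) * F t := by ring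

lemma Antitone.apply_mul_le_two_rpow_mul_rpow_neg_mul (hF : Antitone F) (hρ : 0 ≤ ρ)
    (ht₀ : 0 ≤ t₀) (hdouble : ∀ t, t₀ ≤ t → F (t * 2) ≤ 2 ^ (-ρ) * F t) (ht : t₀ ≤ t)
    (hFt : 0 ≤ F t) {s : ℝ} (hs : 1 ≤ s) :
    F (t * s) ≤ 2 ^ ρ * s ^ (-ρ) * F t := by
  obtain ⟨n, hns, hsn⟩ := exists_nat_pow_near hs one_lt_two
  have hpow : ((2 : ℝ) ^ (-ρ)) ^ n ≤ 2 ^ ρ * s ^ (-ρ) :=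
    calc ((2 : ℝ) ^ (-ρ)) ^ n = 2 ^ ρ * ((2 : ℝ) ^ (n + 1)) ^ (-ρ) := by
          rw [← Real.rpow_pow_comm zero_le_two, pow_succ, mul_left_comm,
            Real.rpow_neg zero_le_two, mul_inv_cancel₀ (by positivity), mul_one]
      _ ≤ 2 ^ ρ * s ^ (-ρ) := mul_le_mul_of_nonneg_left
          (Real.rpow_le_rpow_of_nonpos (one_pos.trans_le hs) hsn.le (neg_nonpos.mpr hρ))
          (by positivity)
  calc F (t * s) ≤ F (t * 2 ^ n) := hF (mul_le_mul_of_nonneg_left hns (ht₀.trans ht))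
    _ ≤ (2 ^ (-ρ)) ^ n * F t := apply_mul_two_pow_le ht₀ hdouble ht n
    _ ≤ 2 ^ ρ * s ^ (-ρ) * F t := mul_le_mul_of_nonneg_right hpow hFt

lemma Antitone.eventually_pos_and_apply_mul_le (hF : Antitone F) (hF₀ : ∀ x, 0 ≤ F x) {p : ℝ}
    (hρ : 0 ≤ ρ) (hρp : ρ < p)
    (h2 : Tendsto (fun t => F (t * 2) / F t) atTop (nhds (2 ^ (-p)))) :
    ∀ᶠ t in atTop, 0 < F t ∧ ∀ s, 1 ≤ s → F (t * s) ≤ 2 ^ ρ * s ^ (-ρ) * F t := by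
  have hlt : (2 : ℝ) ^ (-p) < 2 ^ (-ρ) :=
    Real.rpow_lt_rpow_of_exponent_lt one_lt_two (by linarith)
  have hdouble : ∀ᶠ t in atTop, 0 < F t ∧ F (t * 2) ≤ 2 ^ (-ρ) * F t := by
    filter_upwards [h2.eventually (eventually_lt_nhds hlt),
      h2.eventually (eventually_gt_nhds (Real.rpow_pos_of_pos two_pos (-p)))] with t hlt hpos
    have hFt : 0 < F t := (hF₀ t).lt_of_ne (fun h => by simp [← h] at hpos)
    exact ⟨hFt, ((div_lt_iff₀ hFt).mp hlt).le⟩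
  obtain ⟨t₀, ht₀⟩ := eventually_atTop.mp (hdouble.and (eventually_ge_atTop 0))
  filter_upwards [eventually_ge_atTop t₀] with t ht
  exact ⟨(ht₀ t ht).1.1, fun s hs => hF.apply_mul_le_two_rpow_mul_rpow_neg_mul hρ
    (ht₀ t₀ le_rfl).2 (fun t' ht' => (ht₀ t' ht').1.2) ht (ht₀ t ht).1.1.le hs⟩

end Potter

section LayerCake

variable {α : Type*} [MeasurableSpace α] {μ : Measure α} [IsFiniteMeasure μ]

lemma antitone_measureReal_lt (f : α → ℝ) : Antitone fun t => μ.real {a | t < f a} :=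
  fun _ _ hst => measureReal_mono fun _ h => hst.trans_lt h

lemma integral_sq_eq_integral_Ioi_mul_measureReal_lt {f : α → ℝ} (hf₀ : 0 ≤ᵐ[μ] f)
    (hf : AEMeasurable f μ) :
    ∫ a, f a ^ 2 ∂μ = ∫ t in Ioi 0, 2 * t * μ.real {a | t < f a} := by
  have hnn : 0 ≤ᵐ[volume.restrict (Ioi 0)] fun t : ℝ => 2 * t * μ.real {a | t < f a} :=
    ae_restrict_of_forall_mem measurableSet_Ioi fun t (ht : 0 < t) => by positivity
  rw [integral_eq_lintegral_of_nonneg_ae (ae_of_all _ fun a => sq_nonneg (f a))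
      (hf.pow_const 2).aestronglyMeasurable,
    integral_eq_lintegral_of_nonneg_ae hnn
      ((measurable_const.mul measurable_id).mul
        (antitone_measureReal_lt f).measurable).aestronglyMeasurable]
  congr 1
  have layer_cake := lintegral_rpow_eq_lintegral_meas_lt_mul μ hf₀ hf two_pos
  norm_num only [Real.rpow_two, Real.rpow_one] at layer_cake
  rw [layer_cake, ← lintegral_const_mul' _ _ ENNReal.ofReal_ne_top]
  refine setLIntegral_congr_fun measurableSet_Ioi fun t (ht : 0 < t) => ?_
  rw [ENNReal.ofReal_mul (by positivity), ENNReal.ofReal_mul zero_le_two, ofReal_measureReal]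
  ring

lemma integral_max_sub_sq_eq {X : α → ℝ} (hX : AEMeasurable X μ) {t : ℝ} (ht : 0 < t) :
    ∫ a, max (X a - t) 0 ^ 2 ∂μ =
      2 * t ^ 2 * ∫ u in Ioi 1, μ.real {a | t * u < X a} * (u - 1) := by
  set g : ℝ → ℝ := fun x => 2 * (x - t) * μ.real {a | x < X a}
  have hshift : ∫ s in Ioi 0, g (s + t) = ∫ x in Ioi t, g x := by
    simpa using (measurePreserving_add_right volume t).setIntegral_preimage_emb
      (measurableEmbedding_addRight t) g (Ioi t)
  rw [integral_sq_eq_integral_Ioi_mul_measureReal_lt (f := fun a => max (X a - t) 0)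
    (ae_of_all _ fun a => le_max_right _ _) ((hX.sub_const t).max aemeasurable_const)]
  calc ∫ s in Ioi 0, 2 * s * μ.real {a | s < max (X a - t) 0}
      = ∫ s in Ioi 0, g (s + t) := by
        refine setIntegral_congr_fun measurableSet_Ioi fun s (hs : 0 < s) => ?_
        have hset : {a | s < max (X a - t) 0} = {a | s + t < X a} := by
          ext a
          simp only [mem_ofPred_eq, lt_max_iff, lt_sub_iff_add_lt, hs.not_gt, or_false]
        simp only [g, hset, add_sub_cancel_right]
    _ = t * ∫ u in Ioi 1, g (t * u) := by
        rw [hshift, integral_comp_mul_left_Ioi g 1 ht, mul_one, smul_eq_mul,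
          mul_inv_cancel_left₀ ht.ne']
    _ = 2 * t ^ 2 * ∫ u in Ioi 1, μ.real {a | t * u < X a} * (u - 1) := by
        rw [mul_comm 2, mul_assoc, ← integral_const_mul, ← integral_const_mul,
          ← integral_const_mul]
        congr 1 with u
        simp only [g]
        ring

end LayerCake

lemma Antitone.tendsto_integral_Ioi_one_div_mul_sub_one {F : ℝ → ℝ} (hF : Antitone F)
    (hF₀ : ∀ x, 0 ≤ F x) {p : ℝ} (hp : 2 < p)
    (hRV : ∀ x : ℝ, 0 < x → Tendsto (fun t => F (t * x) / F t) atTop (nhds (x ^ (-p)))) :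
    Tendsto (fun t => ∫ u in Ioi 1, F (t * u) / F t * (u - 1)) atTop
      (nhds (1 / ((p - 1) * (p - 2)))) := by
  obtain ⟨ρ, hρ, hρp⟩ := exists_between hp
  rw [← integral_Ioi_one_rpow_neg_mul_sub_one hp]
  refine tendsto_integral_filter_of_dominated_convergence
    (fun u => 2 ^ ρ * (u ^ (-ρ) * (u - 1))) ?_ ?_
    ((integrableOn_Ioi_one_rpow_neg_mul_sub_one hρ).const_mul _) ?_
  · exact Eventually.of_forall fun t => (((hF.measurable.comp (measurable_const_mul t)).div_const
      _).mul (measurable_id.sub_const 1)).aestronglyMeasurable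
  · filter_upwards [hF.eventually_pos_and_apply_mul_le hF₀ (by linarith) hρp
      (hRV 2 two_pos)] with t ⟨hFt, hpotter⟩
    refine ae_restrict_of_forall_mem measurableSet_Ioi fun u (hu : 1 < u) => ?_
    rw [Real.norm_of_nonneg (mul_nonneg (div_nonneg (hF₀ _) hFt.le) (by linarith)), ← mul_assoc]
    exact mul_le_mul_of_nonneg_right ((div_le_iff₀ hFt).mpr (hpotter u hu.le)) (by linarith)
  · exact ae_restrict_of_forall_mem measurableSet_Ioi fun u (hu : 1 < u) =>
      (hRV u (one_pos.trans hu)).mul_const (u - 1)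

theorem limit_ratio_sq_pos_part_general
    {Ω : Type*} [MeasureSpace Ω] (μ : Measure Ω) [IsProbabilityMeasure μ]
    (X : Ω → ℝ) (hX : MemLp X 2 μ)
    (Fbar : ℝ → ℝ) (hFbar : ∀ x : ℝ, Fbar x = (μ {ω | x < X ω}).toReal)
    (γ : ℝ) (hγ : γ ∈ Ioo (0:ℝ) (1/2))
    (hRV : ∀ x : ℝ, 0 < x →
      Tendsto (fun t : ℝ => Fbar (t * x) / Fbar t) atTop (nhds (x ^ (-(1/γ)))))
    (e : ℝ → ℝ) (he : Tendsto e (nhdsWithin 1 (Iio 1)) atTop) :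
    Tendsto (fun τ : ℝ =>
        (∫ ω, (max (X ω - e τ) 0) ^ 2 ∂μ) / ((e τ) ^ 2 * Fbar (e τ)))
      (nhdsWithin 1 (Iio 1))
      (nhds (2 * γ ^ 2 / ((1 - 2 * γ) * (1 - γ)))) := by
  obtain ⟨hγ₀, hγ₂⟩ := hγ
  have hp : 2 < 1 / γ := by rw [lt_div_iff₀ hγ₀]; linarith
  obtain rfl : Fbar = fun x => μ.real {ω | x < X ω} := funext hFbar
  have hlim := (antitone_measureReal_lt X).tendsto_integral_Ioi_one_div_mul_sub_one
    (fun x => measureReal_nonneg) hp hRV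
  have hval : 2 * (1 / ((1 / γ - 1) * (1 / γ - 2))) = 2 * γ ^ 2 / ((1 - 2 * γ) * (1 - γ)) := by
    have : 1 - 2 * γ ≠ 0 := by linarith
    have : 1 - γ ≠ 0 := by linarith
    field_simp
  have hratio : Tendsto (fun t => (∫ ω, max (X ω - t) 0 ^ 2 ∂μ) / (t ^ 2 * μ.real {ω | t < X ω}))
      atTop (nhds (2 * (1 / ((1 / γ - 1) * (1 / γ - 2))))) := by
    refine (hlim.const_mul 2).congr' ?_
    filter_upwards [eventually_gt_atTop 0] with t ht
    simp_rw [integral_max_sub_sq_eq hX.aemeasurable ht, div_mul_eq_mul_div]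
    rw [integral_div, mul_comm 2 (t ^ 2), mul_assoc,
      mul_div_mul_left _ _ (pow_ne_zero 2 ht.ne'), mul_div_assoc]
  rw [← hval]
  exact hratio.comp he

/-- Suppose `F̄` is regularly varying at `∞` with index `−1/γ` for some
`γ ∈ (0,1/2)`, and `e_τ → ∞` as `τ → 1⁻`.  Then
`E[((X−e_τ)₊)²]/(e_τ² F̄(e_τ)) → 2γ²/((1−2γ)(1−γ))`, where `X ≥ 0` has survival
function `F̄` with `E[X²] < ∞`. -/
theorem limit_ratio_sq_pos_part
    {Ω : Type*} [MeasureSpace Ω] (μ : Measure Ω) [IsProbabilityMeasure μ]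
    (X : Ω → ℝ) (hXnn : ∀ ω, 0 ≤ X ω) (hX : MemLp X 2 μ)
    (Fbar : ℝ → ℝ) (hFbar : ∀ x : ℝ, Fbar x = (μ {ω | x < X ω}).toReal)
    (γ : ℝ) (hγ : γ ∈ Ioo (0:ℝ) (1/2))
    (hRV : ∀ x : ℝ, 0 < x →
      Tendsto (fun t : ℝ => Fbar (t * x) / Fbar t) atTop (nhds (x ^ (-(1/γ)))))
    (e : ℝ → ℝ) (he : Tendsto e (nhdsWithin 1 (Iio 1)) atTop) :
    Tendsto (fun τ : ℝ =>
        (∫ ω, (max (X ω - e τ) 0) ^ 2 ∂μ) / ((e τ) ^ 2 * Fbar (e τ)))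
      (nhdsWithin 1 (Iio 1))
      (nhds (2 * γ ^ 2 / ((1 - 2 * γ) * (1 - γ)))) :=
  limit_ratio_sq_pos_part_general μ X hX Fbar hFbar γ hγ hRV e he
end

section
/- Assume the tail quantile function U of X is regularly varying with index γ ∈ (0,1/2), and the expectile satisfies e_τ/q_τ → (γ^{−1}−1)^{−γ} and F̄(e_τ)/(1−τ) → γ^{−1}−1 as τ → 1, where q_τ = U(1/(1−τ)). Then dev_τ(X)/q_τ → β_γ as τ → 1, where β_γ = (γ^{−1}−1)^{−γ}/sqrt(1−2γ). (First-order asymptotic expansion of the deviatile.) -/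
/-!
Write `V = 1 / F̄`, so that `U` is the generalized inverse of `V`. Since `U ∈ RV_γ` with `γ > 0`,
`U` is unbounded, which forces `F̄ > 0`; then `U (V u) ~ u`, and monotonicity of `U` inverts the
regular variation: `F̄ ∈ RV_{-1/γ}`. By the layer-cake formula
`E[(X - u)₊²] = 2u² ∫₁^∞ (y - 1) F̄(uy) dy`, and dominated convergence under a Potter bound gives
`E[(X - u)₊²] / (u² F̄(u)) → 2γ² / ((1 - γ)(1 - 2γ))`, while `E[(X - u)²] ~ u²`. At `u = e_τ` the
two assumed limits turn `dev_τ(X)² / q_τ²` into `(γ⁻¹ - 1)^{-2γ} (1 + 2γ / (1 - 2γ)) = β_γ²`.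
-/

open MeasureTheory Set Filter ProbabilityTheory Topology

noncomputable def generalizedInverse (V : ℝ → ℝ) (t : ℝ) : ℝ := sInf {x : ℝ | V x ≥ t}

section GeneralizedInverse

variable {V : ℝ → ℝ} {t u x M : ℝ}

lemma nonneg_of_le_apply (hV : ∀ x < 0, V x ≤ 1) (ht : 1 < t) (hx : t ≤ V x) : 0 ≤ x :=
  not_lt.1 fun hx0 => (hV x hx0).not_gt (ht.trans_le hx)

lemma bddBelow_setOf_ge (hV : ∀ x < 0, V x ≤ 1) (ht : 1 < t) : BddBelow {x : ℝ | V x ≥ t} :=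
  ⟨0, fun _ => nonneg_of_le_apply hV ht⟩

lemma nonempty_setOf_ge (hV : Tendsto V atTop atTop) (t : ℝ) : {x : ℝ | V x ≥ t}.Nonempty :=
  (hV.eventually_ge_atTop t).exists

lemma generalizedInverse_nonneg (hV : ∀ x < 0, V x ≤ 1) (ht : 1 < t) :
    0 ≤ generalizedInverse V t := by
  rcases {x : ℝ | V x ≥ t}.eq_empty_or_nonempty with h | h
  · rw [generalizedInverse, h, Real.sInf_empty]
  · exact le_csInf h fun _ => nonneg_of_le_apply hV ht

lemma generalizedInverse_apply_le (hV : ∀ x < 0, V x ≤ 1) (hu : 1 < V u) :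
    generalizedInverse V (V u) ≤ u :=
  csInf_le (bddBelow_setOf_ge hV hu) (le_refl (V u))

lemma exists_lt_of_lt_generalizedInverse (hV : ∀ x < 0, V x ≤ 1) (ht : 1 < t) (hM : 0 ≤ M)
    (h : M < generalizedInverse V t) : ∃ x, M < x ∧ t ≤ V x := by
  rcases {x : ℝ | V x ≥ t}.eq_empty_or_nonempty with hS | ⟨x, hx⟩
  · rw [generalizedInverse, hS, Real.sInf_empty] at h
    exact absurd hM h.not_ge
  · exact ⟨x, h.trans_le (csInf_le (bddBelow_setOf_ge hV ht) hx), hx⟩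

lemma le_generalizedInverse (hmono : Monotone V) (htop : Tendsto V atTop atTop)
    (hx : V x < t) : x ≤ generalizedInverse V t :=
  le_csInf (nonempty_setOf_ge htop t) fun _ hy =>
    le_of_lt (hmono.reflect_lt (hx.trans_le hy))

lemma monotoneOn_generalizedInverse (hV : ∀ x < 0, V x ≤ 1) (htop : Tendsto V atTop atTop) :
    MonotoneOn (generalizedInverse V) (Ioi 1) := fun _ ht _ _ hts =>
  csInf_le_csInf (bddBelow_setOf_ge hV ht) (nonempty_setOf_ge htop _)
    fun _ hx => hts.trans hx

lemma tendsto_generalizedInverse_atTop (hmono : Monotone V) (htop : Tendsto V atTop atTop) :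
    Tendsto (generalizedInverse V) atTop atTop :=
  tendsto_atTop.2 fun M => (eventually_gt_atTop (V M)).mono fun _ =>
    le_generalizedInverse hmono htop

end GeneralizedInverse

def RegularlyVarying (U : ℝ → ℝ) (γ : ℝ) : Prop :=
  ∀ x : ℝ, 0 < x → Tendsto (fun t => U (t * x) / U t) atTop (𝓝 (x ^ γ))

section RegularVariation

variable {U : ℝ → ℝ} {γ : ℝ}

lemma frequently_lt_of_tendsto_div {a c : ℝ} (ha : 1 ≤ a) (hc : 1 < c)
    (hU : Tendsto (fun t => U (t * a) / U t) atTop (𝓝 c)) (hU0 : ∀ᶠ t in atTop, 0 ≤ U t)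
    (M : ℝ) : ∃ᶠ t in atTop, M < U t := by
  by_contra! hle
  obtain ⟨c', hc1, hcc⟩ := exists_between hc
  obtain ⟨T, hT⟩ := eventually_atTop.1 <| (hU.eventually (lt_mem_nhds hcc)).and <|
    hU0.and <| hle.and (eventually_ge_atTop 0)
  have hpos : ∀ t ≥ T, 0 < U t := fun t ht => (hT t ht).2.1.lt_of_ne fun h0 => by
    have := (hT t ht).1
    rw [← h0, div_zero] at this
    linarith
  have hTa : ∀ n : ℕ, T ≤ T * a ^ n := fun n =>
    le_mul_of_one_le_right (hT T le_rfl).2.2.2 (one_le_pow₀ ha)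
  have hiter : ∀ n : ℕ, c' ^ n * U T ≤ U (T * a ^ n) := by
    intro n
    induction n with
    | zero => simp
    | succ n ih =>
      have hstep := (lt_div_iff₀ (hpos _ (hTa n))).1 (hT _ (hTa n)).1
      calc c' ^ (n + 1) * U T = c' * (c' ^ n * U T) := by ring
        _ ≤ c' * U (T * a ^ n) := by gcongr
        _ ≤ U (T * a ^ (n + 1)) := by rw [pow_succ, ← mul_assoc]; linarith
  obtain ⟨n, hn⟩ := (((tendsto_pow_atTop_atTop_of_one_lt hc1).atTop_mul_const
    (hpos T le_rfl)).eventually_gt_atTop M).exists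
  exact hn.not_ge ((hiter n).trans (hT _ (hTa n)).2.2.1)

lemma RegularlyVarying.tendsto_div_of_tendsto_apply_div (hU : RegularlyVarying U γ)
    (hγ : 0 < γ) (hmono : MonotoneOn U (Ioi 1)) (hUpos : ∀ᶠ t in atTop, 0 < U t)
    {ι : Type*} {l : Filter ι} {s t : ι → ℝ} (hs : Tendsto s l atTop) (ht : Tendsto t l atTop)
    {y : ℝ} (hy : 0 < y) (hst : Tendsto (fun i => U (s i) / U (t i)) l (𝓝 y)) :
    Tendsto (fun i => s i / t i) l (𝓝 (y ^ γ⁻¹)) := by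
  have hyγ : (y ^ γ⁻¹) ^ γ = y := by
    rw [← Real.rpow_mul hy.le, inv_mul_cancel₀ hγ.ne', Real.rpow_one]
  rw [tendsto_order]
  constructor
  · intro a ha
    rcases le_or_gt a 0 with ha0 | ha0
    · filter_upwards [hs.eventually_gt_atTop 0, ht.eventually_gt_atTop 0] with i hsi hti
      exact ha0.trans_lt (div_pos hsi hti)
    obtain ⟨c, hac, hcy⟩ := exists_between (hyγ ▸ Real.rpow_lt_rpow ha0.le ha hγ)
    filter_upwards [ht.eventually ((hU a ha0).eventually (gt_mem_nhds hac)),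
      hst.eventually (lt_mem_nhds hcy), ht.eventually hUpos, hs.eventually_gt_atTop 1,
      ht.eventually_gt_atTop 0] with i hUa hUst hUt hs1 ht0
    by_contra! hle
    rw [div_le_iff₀ ht0, mul_comm] at hle
    have := div_le_div_of_nonneg_right (hmono hs1 (hs1.trans_le hle) hle) hUt.le
    linarith
  · intro b hb
    have hb0 : 0 < b := (Real.rpow_nonneg hy.le _).trans_lt hb
    obtain ⟨c, hyc, hcb⟩ := exists_between (hyγ ▸ Real.rpow_lt_rpow (by positivity) hb hγ)
    filter_upwards [ht.eventually ((hU b hb0).eventually (lt_mem_nhds hcb)),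
      hst.eventually (gt_mem_nhds hyc), ht.eventually hUpos,
      (ht.atTop_mul_const hb0).eventually_gt_atTop 1, ht.eventually_gt_atTop 0]
      with i hUb hUst hUt htb ht0
    by_contra! hle
    rw [le_div_iff₀ ht0, mul_comm] at hle
    have := div_le_div_of_nonneg_right (hmono htb (htb.trans_le hle) hle) hUt.le
    linarith

end RegularVariation

section InverseOfRegularlyVarying

variable {V : ℝ → ℝ} {γ : ℝ}

lemma tendsto_generalizedInverse_apply_div (hV : ∀ x < 0, V x ≤ 1) (hmono : Monotone V)
    (htop : Tendsto V atTop atTop) (hU : RegularlyVarying (generalizedInverse V) γ) :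
    Tendsto (fun u => generalizedInverse V (V u) / u) atTop (𝓝 1) := by
  rw [tendsto_order]
  constructor
  -- With `U = generalizedInverse V`: `U (V u) ≤ u ≤ U (V u * ρ)` for every `ρ > 1`, and
  -- `U (V u) / U (V u * ρ) → ρ^(-γ)`, which is close to `1` for `ρ` close to `1`.
  · intro a ha
    have hcont : Tendsto (fun ρ : ℝ => (ρ ^ γ)⁻¹) (𝓝[>] 1) (𝓝 1) := by
      simpa using ((Real.continuousAt_rpow_const 1 γ (Or.inl one_ne_zero)).tendsto.inv₀
        (by simp)).mono_left nhdsWithin_le_nhds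
    obtain ⟨ρ, hρa, hρ1⟩ := ((hcont.eventually (lt_mem_nhds ha)).and self_mem_nhdsWithin).exists
    have hlim : Tendsto (fun u => generalizedInverse V (V u) / generalizedInverse V (V u * ρ))
        atTop (𝓝 (ρ ^ γ)⁻¹) :=
      (((hU ρ (zero_lt_one.trans hρ1)).comp htop).inv₀ (by positivity)).congr fun u => by simp
    filter_upwards [hlim.eventually (lt_mem_nhds hρa), htop.eventually_gt_atTop 1,
      eventually_gt_atTop 0] with u hUa hVu hu
    have hle : u ≤ generalizedInverse V (V u * ρ) :=
      le_generalizedInverse hmono htop (lt_mul_of_one_lt_right (by linarith) hρ1)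
    exact hUa.trans_le (div_le_div_of_nonneg_left (generalizedInverse_nonneg hV hVu) hu hle)
  · intro b hb
    filter_upwards [htop.eventually_gt_atTop 1, eventually_gt_atTop 0] with u hVu hu
    exact ((div_le_one hu).2 (generalizedInverse_apply_le hV hVu)).trans_lt hb

lemma tendsto_apply_mul_div_of_regularlyVarying_generalizedInverse (hV : ∀ x < 0, V x ≤ 1)
    (hmono : Monotone V) (htop : Tendsto V atTop atTop)
    (hU : RegularlyVarying (generalizedInverse V) γ) (hγ : 0 < γ) {y : ℝ} (hy : 0 < y) :
    Tendsto (fun u => V (u * y) / V u) atTop (𝓝 (y ^ γ⁻¹)) := by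
  set U := generalizedInverse V
  have hUtop : Tendsto U atTop atTop := tendsto_generalizedInverse_atTop hmono htop
  have hmy : Tendsto (fun u : ℝ => u * y) atTop atTop := tendsto_id.atTop_mul_const hy
  have hA : Tendsto (fun u => U (V u) / u) atTop (𝓝 1) :=
    tendsto_generalizedInverse_apply_div hV hmono htop hU
  have hst : Tendsto (fun u => U (V (u * y)) / U (V u)) atTop (𝓝 y) := by
    refine (((hA.comp hmy).div hA one_ne_zero).mul_const y).congr' ?_ |>.trans (by simp)
    filter_upwards [eventually_gt_atTop 0, htop.eventually (hUtop.eventually_gt_atTop 0)]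
      with u hu hUu
    simp only [Pi.div_apply, Function.comp_apply]
    field_simp
  exact hU.tendsto_div_of_tendsto_apply_div hγ (monotoneOn_generalizedInverse hV htop)
    (hUtop.eventually_gt_atTop 0) (htop.comp hmy) htop hy hst

end InverseOfRegularlyVarying

section TailFunction

variable {F : ℝ → ℝ} {α γ : ℝ}

lemma pos_of_regularlyVarying_generalizedInverse (hanti : Antitone F) (hneg : ∀ x < 0, F x = 1)
    (hU : RegularlyVarying (generalizedInverse fun x => 1 / F x) γ) (hγ : 0 < γ) (x : ℝ) :
    0 < F x := by
  have hV : ∀ x < 0, 1 / F x ≤ 1 := fun x hx => by rw [hneg x hx, div_one]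
  have hU0 : ∀ᶠ t in atTop, 0 ≤ generalizedInverse (fun x => 1 / F x) t :=
    (eventually_gt_atTop 1).mono fun _ => generalizedInverse_nonneg hV
  obtain ⟨t, hMt, ht⟩ := ((frequently_lt_of_tendsto_div one_le_two
    (Real.one_lt_rpow one_lt_two hγ) (hU 2 two_pos) hU0 (max x 0)).and_eventually
      (eventually_gt_atTop 1)).exists
  -- `1 / F z ≥ t > 0` rules out the junk value `1 / 0 = 0`.
  obtain ⟨z, hxz, hz⟩ := exists_lt_of_lt_generalizedInverse hV ht (le_max_right x 0) hMt
  exact (one_div_pos.1 (zero_lt_one.trans (ht.trans_le hz))).trans_le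
    (hanti ((le_max_left x 0).trans hxz.le))

lemma Antitone.monotone_one_div (hanti : Antitone F) (hpos : ∀ x, 0 < F x) :
    Monotone fun x => 1 / F x :=
  fun _ _ h => one_div_le_one_div_of_le (hpos _) (hanti h)

lemma tendsto_one_div_atTop_of_pos (hpos : ∀ x, 0 < F x) (h0 : Tendsto F atTop (𝓝 0)) :
    Tendsto (fun x => 1 / F x) atTop atTop := by
  simpa only [one_div, Pi.inv_def] using
    (tendsto_nhdsWithin_iff.2 ⟨h0, Eventually.of_forall hpos⟩).inv_tendsto_nhdsGT_zero

lemma regularlyVarying_of_regularlyVarying_generalizedInverse (hanti : Antitone F)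
    (hpos : ∀ x, 0 < F x) (h0 : Tendsto F atTop (𝓝 0)) (hneg : ∀ x < 0, F x = 1)
    (hU : RegularlyVarying (generalizedInverse fun x => 1 / F x) γ) (hγ : 0 < γ) :
    RegularlyVarying F (-γ⁻¹) := fun y hy => by
  have hV : ∀ x < 0, 1 / F x ≤ 1 := fun x hx => by rw [hneg x hx, div_one]
  rw [Real.rpow_neg hy.le]
  refine ((tendsto_apply_mul_div_of_regularlyVarying_generalizedInverse hV (hanti.monotone_one_div hpos)
    (tendsto_one_div_atTop_of_pos hpos h0) hU hγ hy).inv₀ (by positivity)).congr fun u => ?_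
  rw [inv_div, one_div, one_div, inv_div_inv]

lemma le_pow_mul_of_forall_le_mul {T c : ℝ} (hT : 0 ≤ T) (hc : 0 ≤ c)
    (hstep : ∀ u ≥ T, F (u * 2) ≤ c * F u) (n : ℕ) {u : ℝ} (hu : T ≤ u) :
    F (u * 2 ^ n) ≤ c ^ n * F u := by
  induction n with
  | zero => simp
  | succ n ih =>
    have hun : T ≤ u * 2 ^ n :=
      hu.trans (le_mul_of_one_le_right (hT.trans hu) (one_le_pow₀ one_le_two))
    calc F (u * 2 ^ (n + 1)) = F (u * 2 ^ n * 2) := by rw [pow_succ, mul_assoc]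
      _ ≤ c * F (u * 2 ^ n) := hstep _ hun
      _ ≤ c * (c ^ n * F u) := by gcongr
      _ = c ^ (n + 1) * F u := by ring

lemma RegularlyVarying.exists_le_rpow_mul (hF : RegularlyVarying F (-α)) (hanti : Antitone F)
    (hpos : ∀ x, 0 < F x) {β : ℝ} (hβ0 : 0 < β) (hβα : β < α) :
    ∃ T > 0, ∀ u ≥ T, ∀ y ≥ 1, F (u * y) ≤ 2 ^ β * y ^ (-β) * F u := by
  have hlt : (2 : ℝ) ^ (-α) < 2 ^ (-β) :=
    Real.rpow_lt_rpow_of_exponent_lt one_lt_two (by linarith)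
  obtain ⟨T, hT⟩ := eventually_atTop.1 <|
    ((hF 2 two_pos).eventually (gt_mem_nhds hlt)).and (eventually_gt_atTop 0)
  refine ⟨T, (hT T le_rfl).2, fun u hu y hy => ?_⟩
  have hstep : ∀ v ≥ T, F (v * 2) ≤ 2 ^ (-β) * F v := fun v hv =>
    ((div_lt_iff₀ (hpos v)).1 (hT v hv).1).le
  obtain ⟨n, hny, hyn⟩ := exists_nat_pow_near hy one_lt_two
  have hy0 : 0 < y := zero_lt_one.trans_le hy
  calc F (u * y) ≤ F (u * 2 ^ n) := hanti (by gcongr; exact (hT T le_rfl).2.le.trans hu)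
    _ ≤ (2 ^ (-β)) ^ n * F u :=
      le_pow_mul_of_forall_le_mul (hT T le_rfl).2.le (by positivity) hstep n hu
    _ = 2 ^ β * ((2 : ℝ) ^ (n + 1)) ^ (-β) * F u := by
      have h2 : (2 : ℝ) ^ β * 2 ^ (-β) = 1 := by rw [← Real.rpow_add two_pos]; simp
      rw [Real.rpow_pow_comm zero_le_two, pow_succ, Real.mul_rpow (by positivity) zero_le_two]
      linear_combination (-((2 : ℝ) ^ n) ^ (-β) * F u) * h2
    _ ≤ 2 ^ β * y ^ (-β) * F u := by
      have := (hpos u).le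
      gcongr 2 ^ β * ?_ * F u
      exact Real.rpow_le_rpow_of_nonpos hy0 hyn.le (neg_nonpos.2 hβ0.le)

lemma integral_Ioi_one_sub_one_mul_rpow (hα : 2 < α) :
    ∫ y in Ioi 1, (y - 1) * y ^ (-α) = ((α - 1) * (α - 2))⁻¹ := by
  have hint : ∀ {s : ℝ}, s < -1 → IntegrableOn (fun y : ℝ => y ^ s) (Ioi 1) :=
    fun hs => integrableOn_Ioi_rpow_of_lt hs zero_lt_one
  calc ∫ y in Ioi 1, (y - 1) * y ^ (-α)
      = ∫ y in Ioi 1, (y ^ (-α + 1) - y ^ (-α)) := by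
        refine setIntegral_congr_fun measurableSet_Ioi fun y hy => ?_
        rw [Real.rpow_add_one (zero_lt_one.trans hy).ne']
        ring
    _ = ((α - 1) * (α - 2))⁻¹ := by
        rw [integral_sub (hint (by linarith)) (hint (by linarith)),
          integral_Ioi_rpow_of_lt (by linarith) zero_lt_one,
          integral_Ioi_rpow_of_lt (by linarith) zero_lt_one, Real.one_rpow, Real.one_rpow]
        have h1 : α - 1 ≠ 0 := by linarith
        have h2 : α - 2 ≠ 0 := by linarith
        have h3 : -α + 1 + 1 ≠ 0 := by linarith
        have h4 : -α + 1 ≠ 0 := by linarith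
        field_simp
        ring

lemma RegularlyVarying.tendsto_integral_Ioi_one_div (hF : RegularlyVarying F (-α))
    (hanti : Antitone F) (hpos : ∀ x, 0 < F x) (hα : 2 < α) :
    Tendsto (fun u => (∫ y in Ioi 1, (y - 1) * F (u * y)) / F u) atTop
      (𝓝 ((α - 1) * (α - 2))⁻¹) := by
  obtain ⟨β, hβ2, hβα⟩ := exists_between hα
  obtain ⟨T, -, hT⟩ := hF.exists_le_rpow_mul hanti hpos (by linarith) hβα
  rw [← integral_Ioi_one_sub_one_mul_rpow hα]
  refine (tendsto_integral_filter_of_dominated_convergence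
    (F := fun u y => (y - 1) * (F (u * y) / F u)) (fun y => 2 ^ β * y ^ (1 - β))
    ?_ ?_ ?_ ?_).congr fun u => ?_
  · exact Eventually.of_forall fun u => ((measurable_id.sub_const 1).mul
      ((hanti.measurable.comp (measurable_const_mul u)).div_const _)).aestronglyMeasurable
  · filter_upwards [eventually_ge_atTop T] with u hu
    refine (ae_restrict_iff' measurableSet_Ioi).2 (Eventually.of_forall fun y (hy : 1 < y) => ?_)
    have hy0 : 0 < y := zero_lt_one.trans hy
    have hratio : 0 ≤ F (u * y) / F u := (div_pos (hpos _) (hpos _)).le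
    rw [Real.norm_of_nonneg (mul_nonneg (by linarith) hratio)]
    calc (y - 1) * (F (u * y) / F u) ≤ y * (2 ^ β * y ^ (-β)) := by
          gcongr
          · linarith
          · exact (div_le_iff₀ (hpos u)).2 (hT u hu y hy.le)
      _ = 2 ^ β * y ^ (1 - β) := by
          rw [sub_eq_add_neg, Real.rpow_add hy0, Real.rpow_one]; ring
  · exact (integrableOn_Ioi_rpow_of_lt (by linarith) zero_lt_one).const_mul _
  · exact (ae_restrict_iff' measurableSet_Ioi).2 (Eventually.of_forall fun y hy =>
      (hF y (zero_lt_one.trans hy)).const_mul (y - 1))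
  · simp only [← integral_div, mul_div_assoc]

end TailFunction

lemma integral_Ioi_zero_comp_add_sqrt (g : ℝ → ℝ) {u : ℝ} (hu : 0 < u) :
    ∫ t in Ioi 0, g (u + √t) = 2 * u ^ 2 * ∫ y in Ioi 1, (y - 1) * g (u * y) := by
  have himage : (fun y => (u * (y - 1)) ^ 2) '' Ioi 1 = Ioi 0 := by
    ext t
    constructor
    · rintro ⟨y, hy, rfl⟩
      exact pow_pos (mul_pos hu (sub_pos.2 hy)) 2
    · intro (ht : 0 < t)
      refine ⟨1 + √t / u, ?_, ?_⟩
      · simpa using div_pos (Real.sqrt_pos.2 ht) hu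
      · dsimp only
        rw [add_sub_cancel_left, mul_div_cancel₀ _ hu.ne', Real.sq_sqrt ht.le]
  have hinj : InjOn (fun y => (u * (y - 1)) ^ 2) (Ioi 1) := by
    refine StrictMonoOn.injOn fun a (ha : 1 < a) b _ hab => ?_
    have : 0 < u * (a - 1) := mul_pos hu (sub_pos.2 ha)
    exact pow_lt_pow_left₀ (by nlinarith) this.le two_ne_zero
  have hderiv : ∀ y ∈ Ioi (1 : ℝ), HasDerivWithinAt (fun y => (u * (y - 1)) ^ 2)
      (2 * (u * (y - 1)) * u) (Ioi 1) y := fun y _ => by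
    simpa using (((hasDerivAt_id y).sub_const 1).const_mul u).fun_pow 2 |>.hasDerivWithinAt
  rw [← himage, integral_image_eq_integral_abs_deriv_smul measurableSet_Ioi hderiv hinj,
    ← integral_const_mul]
  refine setIntegral_congr_fun measurableSet_Ioi fun y (hy : 1 < y) => ?_
  have hy' : 0 ≤ u * (y - 1) := (mul_pos hu (sub_pos.2 hy)).le
  rw [smul_eq_mul, Real.sqrt_sq hy', abs_of_nonneg (by positivity)]
  ring_nf

section RandomVariable

variable {Ω : Type*} [MeasurableSpace Ω] {μ : Measure Ω} {X : Ω → ℝ}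

lemma antitone_measureReal_lt_s12 [IsFiniteMeasure μ] : Antitone fun x => μ.real {ω | x < X ω} :=
  fun _ _ hxy => measureReal_mono fun _ (hω : _ < _) => hxy.trans_lt hω

lemma measureReal_lt_eq_one_sub_cdf [IsProbabilityMeasure μ] (hX : AEMeasurable X μ) (x : ℝ) :
    μ.real {ω | x < X ω} = 1 - cdf (μ.map X) x := by
  have : IsProbabilityMeasure (μ.map X) := Measure.isProbabilityMeasure_map hX
  rw [cdf_eq_real, ← probReal_compl_eq_one_sub measurableSet_Iic, compl_Iic,
    map_measureReal_apply_of_aemeasurable hX measurableSet_Ioi]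
  rfl

lemma tendsto_measureReal_lt_atTop [IsProbabilityMeasure μ] (hX : AEMeasurable X μ) :
    Tendsto (fun x => μ.real {ω | x < X ω}) atTop (𝓝 0) := by
  simpa [measureReal_lt_eq_one_sub_cdf hX] using (tendsto_cdf_atTop (μ.map X)).const_sub 1

lemma measureReal_lt_eq_one [IsProbabilityMeasure μ] (hX : ∀ ω, 0 ≤ X ω) {x : ℝ} (hx : x < 0) :
    μ.real {ω | x < X ω} = 1 := by
  have hall : {ω | x < X ω} = univ := eq_univ_of_forall fun ω => hx.trans_le (hX ω)
  rw [hall, probReal_univ]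

lemma integral_max_sub_zero_sq [IsFiniteMeasure μ] (hX : MemLp X 2 μ) (u : ℝ) :
    ∫ ω, (max (X ω - u) 0) ^ 2 ∂μ = ∫ t in Ioi 0, μ.real {ω | u + √t < X ω} := by
  have hint : Integrable (fun ω => (max (X ω - u) 0) ^ 2) μ :=
    (hX.sub (memLp_const u)).pos_part.integrable_sq
  rw [hint.integral_eq_integral_meas_lt (Eventually.of_forall fun ω => sq_nonneg _)]
  refine setIntegral_congr_fun measurableSet_Ioi fun t (ht : 0 < t) => ?_
  congr 1
  ext ω
  simp only [mem_ofPred_eq]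
  rw [← Real.sqrt_lt ht.le (le_max_right _ _), lt_max_iff,
    or_iff_left (Real.sqrt_nonneg t).not_gt, lt_sub_iff_add_lt']

lemma integral_max_sub_zero_sq_eq_mul_integral [IsFiniteMeasure μ] (hX : MemLp X 2 μ) {u : ℝ}
    (hu : 0 < u) : ∫ ω, (max (X ω - u) 0) ^ 2 ∂μ =
      2 * u ^ 2 * ∫ y in Ioi 1, (y - 1) * μ.real {ω | u * y < X ω} := by
  rw [integral_max_sub_zero_sq hX,
    integral_Ioi_zero_comp_add_sqrt (fun x => μ.real {ω | x < X ω}) hu]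

lemma tendsto_integral_max_sub_zero_sq_div [IsFiniteMeasure μ] (hX : MemLp X 2 μ) {F : ℝ → ℝ}
    (hF : ∀ x, F x = μ.real {ω | x < X ω}) (hpos : ∀ x, 0 < F x) {α : ℝ}
    (hrv : RegularlyVarying F (-α)) (hα : 2 < α) :
    Tendsto (fun u => (∫ ω, (max (X ω - u) 0) ^ 2 ∂μ) / (u ^ 2 * F u)) atTop
      (𝓝 (2 * ((α - 1) * (α - 2))⁻¹)) := by
  have hanti : Antitone F := funext hF ▸ antitone_measureReal_lt_s12
  refine ((hrv.tendsto_integral_Ioi_one_div hanti hpos hα).const_mul 2).congr' ?_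
  filter_upwards [eventually_gt_atTop 0] with u hu
  simp only [integral_max_sub_zero_sq_eq_mul_integral hX hu, ← hF]
  rw [mul_right_comm, mul_comm (u ^ 2), mul_div_mul_right _ _ (pow_ne_zero 2 hu.ne'),
    mul_div_assoc]

lemma integral_sub_const_sq [IsProbabilityMeasure μ] (hX : MemLp X 2 μ) (u : ℝ) :
    ∫ ω, (X ω - u) ^ 2 ∂μ = ∫ ω, X ω ^ 2 ∂μ - 2 * u * ∫ ω, X ω ∂μ + u ^ 2 := by
  have hX1 : Integrable X μ := hX.integrable one_le_two
  have hX2u : Integrable (fun ω => 2 * X ω * u) μ := (hX1.const_mul 2).mul_const u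
  have hsub : Integrable (fun ω => X ω ^ 2 - 2 * X ω * u) μ := hX.integrable_sq.sub hX2u
  simp_rw [sub_sq]
  rw [integral_add hsub (integrable_const _), integral_sub hX.integrable_sq hX2u,
    integral_mul_const, integral_const_mul, integral_const, probReal_univ, one_smul]
  ring

lemma tendsto_integral_sub_sq_div_sq [IsProbabilityMeasure μ] (hX : MemLp X 2 μ) :
    Tendsto (fun u => (∫ ω, (X ω - u) ^ 2 ∂μ) / u ^ 2) atTop (𝓝 1) := by
  have h : Tendsto (fun u : ℝ => (∫ ω, X ω ^ 2 ∂μ) * u⁻¹ ^ 2 - 2 * (∫ ω, X ω ∂μ) * u⁻¹ + 1)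
      atTop (𝓝 1) := by
    simpa using (((tendsto_inv_atTop_zero.pow 2).const_mul (∫ ω, X ω ^ 2 ∂μ)).sub
      (tendsto_inv_atTop_zero.const_mul (2 * ∫ ω, X ω ∂μ))).add_const 1
  refine h.congr' ((eventually_ne_atTop 0).mono fun u hu => ?_)
  dsimp only
  rw [integral_sub_const_sq hX]
  field_simp

end RandomVariable

lemma tendsto_one_div_one_sub_nhdsLT : Tendsto (fun τ : ℝ => 1 / (1 - τ)) (𝓝[<] 1) atTop := by
  have h : Tendsto (fun τ : ℝ => 1 - τ) (𝓝[<] 1) (𝓝[>] 0) :=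
    tendsto_nhdsWithin_iff.2 ⟨((continuous_sub_left 1).tendsto' 1 0 (sub_self 1)).mono_left
      nhdsWithin_le_nhds, eventually_nhdsWithin_of_forall fun _ hτ => mem_Ioi.2 (sub_pos.2 hτ)⟩
  simpa only [one_div, Pi.inv_def] using h.inv_tendsto_nhdsGT_zero

lemma tendsto_sqrt_deviatile_div {e q G P Q : ℝ → ℝ} {a b L : ℝ} (hL : 0 ≤ L)
    (he : ∀ᶠ τ in 𝓝[<] 1, e τ ≠ 0) (hq : ∀ᶠ τ in 𝓝[<] 1, 0 < q τ)
    (hG : ∀ᶠ τ in 𝓝[<] 1, G τ ≠ 0)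
    (hP : Tendsto (fun τ => P τ / (e τ ^ 2 * G τ)) (𝓝[<] 1) (𝓝 a))
    (hQ : Tendsto (fun τ => Q τ / e τ ^ 2) (𝓝[<] 1) (𝓝 1))
    (hGlim : Tendsto (fun τ => G τ / (1 - τ)) (𝓝[<] 1) (𝓝 b))
    (heq : Tendsto (fun τ => e τ / q τ) (𝓝[<] 1) (𝓝 L)) :
    Tendsto (fun τ => √((2 * τ - 1) / (1 - τ) * P τ + Q τ) / q τ) (𝓝[<] 1)
      (𝓝 (√(a * b + 1) * L)) := by
  have hτ : Tendsto (fun τ : ℝ => 2 * τ - 1) (𝓝[<] 1) (𝓝 1) := by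
    have hcont : Continuous fun τ : ℝ => 2 * τ - 1 := by fun_prop
    exact (hcont.tendsto' 1 1 (by norm_num)).mono_left nhdsWithin_le_nhds
  have hsq : Tendsto (fun τ => ((2 * τ - 1) / (1 - τ) * P τ + Q τ) / q τ ^ 2) (𝓝[<] 1)
      (𝓝 ((a * b + 1) * L ^ 2)) := by
    refine ((((hτ.mul hP).mul hGlim).add hQ).mul (heq.pow 2)).congr' ?_ |>.trans (by simp)
    filter_upwards [he, hq, hG, self_mem_nhdsWithin] with τ heτ hqτ hGτ (hτ1 : τ < 1)
    have : 1 - τ ≠ 0 := (sub_pos.2 hτ1).ne'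
    field_simp
  rw [← Real.sqrt_sq hL, ← Real.sqrt_mul' _ (sq_nonneg L)]
  refine ((Real.continuous_sqrt.tendsto _).comp hsq).congr' ?_
  filter_upwards [hq] with τ hqτ
  rw [Function.comp_apply, Real.sqrt_div' _ (sq_nonneg _), Real.sqrt_sq hqτ.le]

theorem deviatile_first_order_expansion_general
    {Ω : Type*} [MeasureSpace Ω] (μ : Measure Ω) [IsProbabilityMeasure μ]
    (X : Ω → ℝ) (hXnn : ∀ ω, 0 ≤ X ω) (hX : MemLp X 2 μ)
    (Fbar : ℝ → ℝ) (hFbar : ∀ x : ℝ, Fbar x = (μ {ω | x < X ω}).toReal)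
    (γ : ℝ) (hγ : γ ∈ Ioo (0:ℝ) (1/2))
    (U : ℝ → ℝ) (hUq : ∀ t : ℝ, U t = sInf {x : ℝ | 1 / Fbar x ≥ t})
    (hU : ∀ x : ℝ, 0 < x →
      Tendsto (fun t : ℝ => U (t * x) / U t) atTop (nhds (x ^ γ)))
    (q : ℝ → ℝ) (hq : ∀ τ : ℝ, q τ = U (1 / (1 - τ)))
    (e : ℝ → ℝ)
    (heq : Tendsto (fun τ : ℝ => e τ / q τ) (nhdsWithin 1 (Iio 1))
      (nhds ((γ⁻¹ - 1) ^ (-γ))))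
    (hFe : Tendsto (fun τ : ℝ => Fbar (e τ) / (1 - τ)) (nhdsWithin 1 (Iio 1))
      (nhds (γ⁻¹ - 1))) :
    Tendsto (fun τ : ℝ =>
        Real.sqrt ((2 * τ - 1) / (1 - τ) * (∫ ω, (max (X ω - e τ) 0) ^ 2 ∂μ)
          + ∫ ω, (X ω - e τ) ^ 2 ∂μ) / q τ)
      (nhdsWithin 1 (Iio 1))
      (nhds ((γ⁻¹ - 1) ^ (-γ) / Real.sqrt (1 - 2 * γ))) := by
  obtain ⟨hγ0, hγ2⟩ := hγ
  obtain rfl : U = generalizedInverse fun x => 1 / Fbar x := funext hUq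
  have hF : Fbar = fun x => μ.real {ω | x < X ω} := funext hFbar
  have hanti : Antitone Fbar := hF ▸ antitone_measureReal_lt_s12
  have h0 : Tendsto Fbar atTop (𝓝 0) := hF ▸ tendsto_measureReal_lt_atTop hX.aemeasurable
  have hneg : ∀ x < 0, Fbar x = 1 := hF ▸ fun x => measureReal_lt_eq_one hXnn
  have hpos := pos_of_regularlyVarying_generalizedInverse hanti hneg hU hγ0
  have hqtop : Tendsto q (𝓝[<] 1) atTop :=
    ((tendsto_generalizedInverse_atTop (hanti.monotone_one_div hpos)
      (tendsto_one_div_atTop_of_pos hpos h0)).comp tendsto_one_div_one_sub_nhdsLT).congr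
      fun τ => (hq τ).symm
  have hα : 2 < γ⁻¹ := by rw [lt_inv_comm₀ two_pos hγ0]; linarith
  have hL : 0 < (γ⁻¹ - 1) ^ (-γ) := Real.rpow_pos_of_pos (by linarith) _
  have hetop : Tendsto e (𝓝[<] 1) atTop :=
    (heq.pos_mul_atTop hL hqtop).congr' ((hqtop.eventually_ne_atTop 0).mono fun τ hτ =>
      div_mul_cancel₀ (e τ) hτ)
  have hW := tendsto_sqrt_deviatile_div hL.le (hetop.eventually_ne_atTop 0)
    (hqtop.eventually_gt_atTop 0) (Eventually.of_forall fun τ => (hpos (e τ)).ne')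
    ((tendsto_integral_max_sub_zero_sq_div hX hFbar hpos
      (regularlyVarying_of_regularlyVarying_generalizedInverse hanti hpos h0 hneg hU hγ0)
      hα).comp hetop) ((tendsto_integral_sub_sq_div_sq hX).comp hetop) hFe heq
  have hc : 2 * ((γ⁻¹ - 1) * (γ⁻¹ - 2))⁻¹ * (γ⁻¹ - 1) + 1 = (1 - 2 * γ)⁻¹ := by
    field_simp [show γ⁻¹ - 1 ≠ 0 by linarith, show γ⁻¹ - 2 ≠ 0 by linarith,
      show 1 - γ ≠ 0 by linarith, show 1 - 2 * γ ≠ 0 by linarith]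
    ring
  rwa [hc, Real.sqrt_inv, inv_mul_eq_div] at hW

/-- Assume the tail quantile function `U` of `X` is regularly varying
with index `γ ∈ (0,1/2)`, and the expectile satisfies `e_τ/q_τ → (γ⁻¹−1)^{−γ}` and
`F̄(e_τ)/(1−τ) → γ⁻¹−1` as `τ → 1⁻`, where `q_τ = U(1/(1−τ))`.  Then
`dev_τ(X)/q_τ → β_γ = (γ⁻¹−1)^{−γ}/sqrt(1−2γ)` (first-order asymptotic expansion
of the deviatile, where `dev_τ(X)² = ((2τ−1)/(1−τ)) E[((X−e_τ)₊)²] + E[(X−e_τ)²]`). -/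
theorem deviatile_first_order_expansion
    {Ω : Type*} [MeasureSpace Ω] (μ : Measure Ω) [IsProbabilityMeasure μ]
    (X : Ω → ℝ) (hXnn : ∀ ω, 0 ≤ X ω) (hX : MemLp X 2 μ)
    (Fbar : ℝ → ℝ) (hFbar : ∀ x : ℝ, Fbar x = (μ {ω | x < X ω}).toReal)
    (γ : ℝ) (hγ : γ ∈ Ioo (0:ℝ) (1/2))
    (U : ℝ → ℝ) (hUq : ∀ t : ℝ, U t = sInf {x : ℝ | 1 / Fbar x ≥ t})
    (hU : ∀ x : ℝ, 0 < x →
      Tendsto (fun t : ℝ => U (t * x) / U t) atTop (nhds (x ^ γ)))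
    (q : ℝ → ℝ) (hq : ∀ τ : ℝ, q τ = U (1 / (1 - τ)))
    (e : ℝ → ℝ)
    (he : ∀ τ ∈ Ioo (0:ℝ) 1, IsMinOn
      (fun x : ℝ => ∫ ω, (τ * (max (X ω - x) 0) ^ 2
        + (1 - τ) * (max (-(X ω - x)) 0) ^ 2) ∂μ) univ (e τ))
    (heq : Tendsto (fun τ : ℝ => e τ / q τ) (nhdsWithin 1 (Iio 1))
      (nhds ((γ⁻¹ - 1) ^ (-γ))))
    (hFe : Tendsto (fun τ : ℝ => Fbar (e τ) / (1 - τ)) (nhdsWithin 1 (Iio 1))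
      (nhds (γ⁻¹ - 1))) :
    Tendsto (fun τ : ℝ =>
        Real.sqrt ((2 * τ - 1) / (1 - τ) * (∫ ω, (max (X ω - e τ) 0) ^ 2 ∂μ)
          + ∫ ω, (X ω - e τ) ^ 2 ∂μ) / q τ)
      (nhdsWithin 1 (Iio 1))
      (nhds ((γ⁻¹ - 1) ^ (-γ) / Real.sqrt (1 - 2 * γ))) :=
  deviatile_first_order_expansion_general μ X hXnn hX Fbar hFbar γ hγ U hUq hU q hq e heq hFe
end
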